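/- Let M_b and M_c be two Metropolis-Hastings-type kernels with the same proposal kernel Q and acceptance probability functions b, c: G×G → [0,1], i.e., M_b(x,dz) = b(x,z)Q(x,dz) + δ_x(dz)(1 − ∫ b(x,y)Q(x,dy)). Suppose sup_x M_b V(x)/V(x) ≤ T for some T ≥ 1 and there exist functions η, ξ: G → [0,∞) and a set B ⊆ G with |b(x,y) − c(x,y)| ≤ 1_B(y)(η(x)+η(y)) b(x,y) ξ(x) for all x, y. Then sup_{x ∈ B} ‖M_b(x,·) − M_c(x,·)‖_V / V(x) ≤ 4T ‖η·1_B‖_∞ ‖ξ·1_B‖_∞. -/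

import Mathlib

open MeasureTheory ProbabilityTheory

/-- The `V`-weighted distance `‖μ − ν‖_V = sup_{|f| ≤ V} |μ(f) − ν(f)|`. -/
noncomputable def vDist {G : Type*} [MeasurableSpace G] (V : G → ℝ) (μ ν : Measure G) : ℝ :=
  ⨆ f : {f : G → ℝ // Measurable f ∧ ∀ x, |f x| ≤ V x},
    |(∫ x, (f : G → ℝ) x ∂μ) - ∫ x, (f : G → ℝ) x ∂ν|

/-- Metropolis–Hastings type transition measure with proposal `Q` and acceptance
probability `b`: `M_b(x,dz) = b(x,z) Q(x,dz) + δ_x(dz)(1 − ∫ b(x,y) Q(x,dy))`. -/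
noncomputable def MHker {G : Type*} [MeasurableSpace G]
    (Q : Kernel G G) (b : G → G → ℝ) (x : G) : Measure G :=
  (Q x).withDensity (fun z => ENNReal.ofReal (b x z)) +
    (1 - ∫⁻ y, ENNReal.ofReal (b x y) ∂(Q x)) • Measure.dirac x

/-!
For `x ∈ B` the hypothesis gives `|b(x,z) − c(x,z)| ≤ D b(x,z)` with `D = 2‖η 1_B‖ ‖ξ 1_B‖`.
For a test function `|f| ≤ V`,
`M_b f(x) − M_c f(x) = ∫ (b − c)(x,z) f(z) Q(x,dz) − f(x) ∫ (b − c)(x,z) Q(x,dz)`,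
whose first term is at most `D ∫ b(x,z) V(z) Q(x,dz) ≤ D M_b V(x) ≤ D T V(x)` and whose
second is at most `D V(x) ≤ D T V(x)`.
-/

section WithDensityOfReal

variable {G : Type*} [MeasurableSpace G] {μ : Measure G} {β : G → ℝ}

lemma integrable_withDensity_ofReal_iff (hβm : Measurable β) (hβ : ∀ z, 0 ≤ β z)
    {g : G → ℝ} :
    Integrable g (μ.withDensity fun z => ENNReal.ofReal (β z)) ↔
      Integrable (fun z => β z * g z) μ := by
  rw [integrable_withDensity_iff_integrable_smul' (by fun_prop)
    (ae_of_all _ fun _ => ENNReal.ofReal_lt_top)]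
  simp only [ENNReal.toReal_ofReal (hβ _), smul_eq_mul]

lemma integral_withDensity_ofReal (hβm : Measurable β) (hβ : ∀ z, 0 ≤ β z) (g : G → ℝ) :
    ∫ z, g z ∂μ.withDensity (fun z => ENNReal.ofReal (β z)) = ∫ z, β z * g z ∂μ := by
  rw [integral_withDensity_eq_integral_toReal_smul (by fun_prop)
    (ae_of_all _ fun _ => ENNReal.ofReal_lt_top)]
  simp only [ENNReal.toReal_ofReal (hβ _), smul_eq_mul]

lemma integrable_of_mem_Icc [IsFiniteMeasure μ] (hβm : Measurable β)
    (hβ : ∀ z, β z ∈ Set.Icc 0 1) :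
    Integrable β μ :=
  .of_bound hβm.aestronglyMeasurable 1 (ae_of_all _ fun z => by
    rw [Real.norm_eq_abs, abs_of_nonneg (hβ z).1]; exact (hβ z).2)

variable [IsProbabilityMeasure μ]

lemma lintegral_ofReal_le_one (hβ : ∀ z, β z ≤ 1) :
    ∫⁻ z, ENNReal.ofReal (β z) ∂μ ≤ 1 :=
  calc ∫⁻ z, ENNReal.ofReal (β z) ∂μ ≤ ∫⁻ _, 1 ∂μ :=
        lintegral_mono fun z => ENNReal.ofReal_le_one.2 (hβ z)
    _ = 1 := by simp

lemma toReal_one_sub_lintegral_ofReal (hβm : Measurable β) (hβ : ∀ z, β z ∈ Set.Icc 0 1) :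
    (1 - ∫⁻ z, ENNReal.ofReal (β z) ∂μ).toReal = 1 - ∫ z, β z ∂μ := by
  rw [ENNReal.toReal_sub_of_le (lintegral_ofReal_le_one fun z => (hβ z).2) ENNReal.one_ne_top,
    integral_eq_lintegral_of_nonneg_ae (ae_of_all _ fun z => (hβ z).1)
      hβm.aestronglyMeasurable, ENNReal.toReal_one]

end WithDensityOfReal

lemma abs_sub_le_mul_of_mem {G : Type*} {b c : G → G → ℝ} {x : G} {η ξ : G → ℝ} {B : Set G}
    {Cη Cξ : ℝ}
    (hη0 : ∀ y, 0 ≤ η y) (hξ0 : ∀ y, 0 ≤ ξ y)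
    (hCη : ∀ y ∈ B, η y ≤ Cη) (hCξ : ∀ y ∈ B, ξ y ≤ Cξ) (hb : ∀ z, 0 ≤ b x z)
    (hdiff : ∀ y, |b x y - c x y|
      ≤ Set.indicator B (fun _ => (1 : ℝ)) y * (η x + η y) * b x y * ξ x)
    (hx : x ∈ B) (z : G) :
    |b x z - c x z| ≤ 2 * Cη * Cξ * b x z := by
  have hCη0 : 0 ≤ Cη := (hη0 x).trans (hCη x hx)
  have hCξ0 : 0 ≤ Cξ := (hξ0 x).trans (hCξ x hx)
  have hbz := hb z
  by_cases hz : z ∈ B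
  · calc |b x z - c x z| ≤ (η x + η z) * b x z * ξ x := by
          simpa [Set.indicator_of_mem hz] using hdiff z
      _ ≤ (Cη + Cη) * b x z * Cξ := by
          have := hη0 x; have := hη0 z; have := hξ0 x
          gcongr
          exacts [hCη x hx, hCη z hz, hCξ x hx]
      _ = 2 * Cη * Cξ * b x z := by ring
  · calc |b x z - c x z| ≤ 0 := by simpa [Set.indicator_of_notMem hz] using hdiff z
      _ ≤ 2 * Cη * Cξ * b x z := by positivity

section MHker

variable {G : Type*} [MeasurableSpace G] {Q : Kernel G G} {b c : G → G → ℝ} {x : G}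

lemma integrable_mul_of_integrable_MHker (hbm : Measurable (b x)) (hb : ∀ z, 0 ≤ b x z)
    {g : G → ℝ} (hg : Integrable g (MHker Q b x)) :
    Integrable (fun z => b x z * g z) (Q x) :=
  (integrable_withDensity_ofReal_iff hbm hb).1 (integrable_add_measure.1 hg).1

lemma integral_mul_le_integral_MHker (hbm : Measurable (b x)) (hb : ∀ z, 0 ≤ b x z)
    {g : G → ℝ} (hg0 : ∀ z, 0 ≤ g z) (hg : Integrable g (MHker Q b x)) :
    ∫ z, b x z * g z ∂Q x ≤ ∫ z, g z ∂MHker Q b x := by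
  obtain ⟨h_accept, h_reject⟩ := integrable_add_measure.1 hg
  rw [MHker, integral_add_measure h_accept h_reject, integral_withDensity_ofReal hbm hb]
  exact le_add_of_nonneg_right (integral_nonneg hg0)

variable [IsMarkovKernel Q]

lemma integral_MHker (hbm : Measurable (b x)) (hb : ∀ z, b x z ∈ Set.Icc 0 1) {g : G → ℝ}
    (hgm : Measurable g) (hg : Integrable (fun z => b x z * g z) (Q x)) :
    ∫ z, g z ∂MHker Q b x = ∫ z, b x z * g z ∂Q x + (1 - ∫ z, b x z ∂Q x) * g x := by
  have h_accept : Integrable g ((Q x).withDensity fun z => ENNReal.ofReal (b x z)) :=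
    (integrable_withDensity_ofReal_iff hbm fun z => (hb z).1).2 hg
  have h_reject : Integrable g
      ((1 - ∫⁻ y, ENNReal.ofReal (b x y) ∂Q x) • Measure.dirac x) :=
    (integrable_dirac' hgm.stronglyMeasurable enorm_lt_top).smul_measure
      (ENNReal.sub_ne_top ENNReal.one_ne_top)
  rw [MHker, integral_add_measure h_accept h_reject,
    integral_withDensity_ofReal hbm fun z => (hb z).1, integral_smul_measure,
    integral_dirac' _ _ hgm.stronglyMeasurable, toReal_one_sub_lintegral_ofReal hbm hb,
    smul_eq_mul]

lemma integral_MHker_sub_integral_MHker (hbm : Measurable (b x)) (hcm : Measurable (c x))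
    (hb : ∀ z, b x z ∈ Set.Icc 0 1) (hc : ∀ z, c x z ∈ Set.Icc 0 1) {f : G → ℝ}
    (hfm : Measurable f) (hbf : Integrable (fun z => b x z * f z) (Q x))
    (hcf : Integrable (fun z => c x z * f z) (Q x)) :
    ∫ z, f z ∂MHker Q b x - ∫ z, f z ∂MHker Q c x
      = ∫ z, (b x z - c x z) * f z ∂Q x - (∫ z, (b x z - c x z) ∂Q x) * f x := by
  simp_rw [sub_mul]
  rw [integral_MHker hbm hb hfm hbf, integral_MHker hcm hc hfm hcf, integral_sub hbf hcf,
    integral_sub (integrable_of_mem_Icc hbm hb) (integrable_of_mem_Icc hcm hc)]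
  ring

lemma abs_integral_MHker_sub_le (hbm : Measurable (b x)) (hcm : Measurable (c x))
    (hb : ∀ z, b x z ∈ Set.Icc 0 1) (hc : ∀ z, c x z ∈ Set.Icc 0 1) {D : ℝ} (hD : 0 ≤ D)
    (hbc : ∀ z, |b x z - c x z| ≤ D * b x z) {V : G → ℝ}
    (hbV : Integrable (fun z => b x z * V z) (Q x)) {f : G → ℝ} (hfm : Measurable f)
    (hfV : ∀ z, |f z| ≤ V z) :
    |∫ z, f z ∂MHker Q b x - ∫ z, f z ∂MHker Q c x|
      ≤ D * (∫ z, b x z * V z ∂Q x + V x) := by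
  have hbf : Integrable (fun z => b x z * f z) (Q x) :=
    hbV.mono' (hbm.mul hfm).aestronglyMeasurable (ae_of_all _ fun z => by
      rw [Real.norm_eq_abs, abs_mul, abs_of_nonneg (hb z).1]
      exact mul_le_mul_of_nonneg_left (hfV z) (hb z).1)
  have hcf : Integrable (fun z => c x z * f z) (Q x) :=
    (hbV.const_mul (1 + D)).mono' (hcm.mul hfm).aestronglyMeasurable (ae_of_all _ fun z => by
      have hc_le : c x z ≤ (1 + D) * b x z := by linarith [(abs_le.1 (hbc z)).1]
      rw [Real.norm_eq_abs, abs_mul, abs_of_nonneg (hc z).1, ← mul_assoc]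
      exact mul_le_mul hc_le (hfV z) (abs_nonneg _)
        (mul_nonneg (by linarith) (hb z).1))
  have h_accept : |∫ z, (b x z - c x z) * f z ∂Q x| ≤ D * ∫ z, b x z * V z ∂Q x := by
    rw [← integral_const_mul]
    refine (abs_integral_le_integral_abs).trans (integral_mono ?_ (hbV.const_mul D) fun z => ?_)
    · exact ((hbf.sub hcf).congr (ae_of_all _ fun z => by simp only [Pi.sub_apply]; ring)).abs
    · rw [abs_mul, ← mul_assoc]
      exact mul_le_mul (hbc z) (hfV z) (abs_nonneg _) (mul_nonneg hD (hb z).1)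
  have h_reject : |∫ z, (b x z - c x z) ∂Q x| ≤ D := by
    have hbi := integrable_of_mem_Icc (μ := Q x) hbm hb
    calc |∫ z, (b x z - c x z) ∂Q x| ≤ ∫ z, D * b x z ∂Q x :=
          abs_integral_le_integral_abs.trans
            (integral_mono ((hbi.sub (integrable_of_mem_Icc hcm hc)).abs) (hbi.const_mul D) hbc)
      _ ≤ ∫ _, D ∂Q x :=
          integral_mono (hbi.const_mul D) (integrable_const D)
            fun z => mul_le_of_le_one_right hD (hb z).2
      _ = D := by simp
  rw [integral_MHker_sub_integral_MHker hbm hcm hb hc hfm hbf hcf, mul_add]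
  refine (abs_sub _ _).trans (add_le_add h_accept ?_)
  rw [abs_mul]
  exact mul_le_mul h_reject (hfV x) (abs_nonneg _) hD

lemma vDist_le {μ ν : Measure G} {V : G → ℝ} {C : ℝ} (hC : 0 ≤ C)
    (h : ∀ f : G → ℝ, Measurable f → (∀ z, |f z| ≤ V z) →
      |∫ z, f z ∂μ - ∫ z, f z ∂ν| ≤ C) :
    vDist V μ ν ≤ C :=
  Real.iSup_le (fun f => h f f.2.1 f.2.2) hC

lemma vDist_MHker_le (hbm : Measurable (b x)) (hcm : Measurable (c x))
    (hb : ∀ z, b x z ∈ Set.Icc 0 1) (hc : ∀ z, c x z ∈ Set.Icc 0 1) {D : ℝ} (hD : 0 ≤ D)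
    (hbc : ∀ z, |b x z - c x z| ≤ D * b x z) {V : G → ℝ} (hV : ∀ z, 0 ≤ V z)
    (hVint : Integrable V (MHker Q b x)) :
    vDist V (MHker Q b x) (MHker Q c x) ≤ D * (∫ z, V z ∂MHker Q b x + V x) := by
  have hb0 : ∀ z, 0 ≤ b x z := fun z => (hb z).1
  refine vDist_le (mul_nonneg hD (add_nonneg (integral_nonneg hV) (hV x))) fun f hfm hfV => ?_
  calc |∫ z, f z ∂MHker Q b x - ∫ z, f z ∂MHker Q c x|
      ≤ D * (∫ z, b x z * V z ∂Q x + V x) :=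
        abs_integral_MHker_sub_le hbm hcm hb hc hD hbc
          (integrable_mul_of_integrable_MHker hbm hb0 hVint) hfm hfV
    _ ≤ D * (∫ z, V z ∂MHker Q b x + V x) := by
        gcongr
        exact integral_mul_le_integral_MHker hbm hb0 hV hVint

end MHker

theorem mh_acceptance_perturbation_general {G : Type*} [MeasurableSpace G]
    (Q : Kernel G G) [IsMarkovKernel Q]
    (V : G → ℝ) (hV : ∀ x, 1 ≤ V x)
    (b c : G → G → ℝ)
    (hb : ∀ x y, b x y ∈ Set.Icc (0 : ℝ) 1) (hc : ∀ x y, c x y ∈ Set.Icc (0 : ℝ) 1)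
    (hbmeas : Measurable (Function.uncurry b)) (hcmeas : Measurable (Function.uncurry c))
    (T : ℝ) (hT : 1 ≤ T)
    (hVint : ∀ x, Integrable V (MHker Q b x))
    (hTbound : ∀ x, ∫ y, V y ∂(MHker Q b x) ≤ T * V x)
    (η ξ : G → ℝ) (hη0 : ∀ x, 0 ≤ η x) (hξ0 : ∀ x, 0 ≤ ξ x)
    (B : Set G)
    (Cη Cξ : ℝ)
    (hCη : ∀ y ∈ B, η y ≤ Cη) (hCξ : ∀ y ∈ B, ξ y ≤ Cξ)
    (hdiff : ∀ x y, |b x y - c x y|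
      ≤ Set.indicator B (fun _ => (1 : ℝ)) y * (η x + η y) * b x y * ξ x) :
    ∀ x ∈ B, vDist V (MHker Q b x) (MHker Q c x) ≤ 4 * T * Cη * Cξ * V x := by
  intro x hx
  have hCη0 : 0 ≤ Cη := (hη0 x).trans (hCη x hx)
  have hCξ0 : 0 ≤ Cξ := (hξ0 x).trans (hCξ x hx)
  have hVx : 0 ≤ V x := zero_le_one.trans (hV x)
  calc vDist V (MHker Q b x) (MHker Q c x)
      ≤ 2 * Cη * Cξ * (∫ y, V y ∂MHker Q b x + V x) :=
        vDist_MHker_le hbmeas.of_uncurry_left hcmeas.of_uncurry_left (hb x) (hc x)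
          (by positivity)
          (abs_sub_le_mul_of_mem hη0 hξ0 hCη hCξ (fun z => (hb x z).1) (hdiff x) hx)
          (fun z => zero_le_one.trans (hV z)) (hVint x)
    _ ≤ 2 * Cη * Cξ * (T * V x + T * V x) := by
        gcongr
        exacts [hTbound x, le_mul_of_one_le_left hVx hT]
    _ = 4 * T * Cη * Cξ * V x := by ring

/-- comparison of two MH-type kernels with common proposal and acceptance
probabilities `b, c`; under `|b − c| ≤ 1_B(y)(η(x)+η(y)) b ξ(x)` and the Lyapunov bound
`M_b V ≤ T V`, one has `‖M_b(x,·) − M_c(x,·)‖_V ≤ 4T ‖η·1_B‖_∞ ‖ξ·1_B‖_∞ V(x)` on `B`. -/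
theorem mh_acceptance_perturbation {G : Type*} [MeasurableSpace G]
    (Q : Kernel G G) [IsMarkovKernel Q]
    (V : G → ℝ) (hVmeas : Measurable V) (hV : ∀ x, 1 ≤ V x)
    (b c : G → G → ℝ)
    (hb : ∀ x y, b x y ∈ Set.Icc (0 : ℝ) 1) (hc : ∀ x y, c x y ∈ Set.Icc (0 : ℝ) 1)
    (hbmeas : Measurable (Function.uncurry b)) (hcmeas : Measurable (Function.uncurry c))
    (T : ℝ) (hT : 1 ≤ T)
    (hVint : ∀ x, Integrable V (MHker Q b x))
    (hTbound : ∀ x, ∫ y, V y ∂(MHker Q b x) ≤ T * V x)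
    (η ξ : G → ℝ) (hη0 : ∀ x, 0 ≤ η x) (hξ0 : ∀ x, 0 ≤ ξ x)
    (B : Set G) (hB : MeasurableSet B)
    (Cη Cξ : ℝ) (hCη0 : 0 ≤ Cη) (hCξ0 : 0 ≤ Cξ)
    (hCη : ∀ y ∈ B, η y ≤ Cη) (hCξ : ∀ y ∈ B, ξ y ≤ Cξ)
    (hdiff : ∀ x y, |b x y - c x y|
      ≤ Set.indicator B (fun _ => (1 : ℝ)) y * (η x + η y) * b x y * ξ x) :
    ∀ x ∈ B, vDist V (MHker Q b x) (MHker Q c x) ≤ 4 * T * Cη * Cξ * V x :=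
  mh_acceptance_perturbation_general Q V hV b c hb hc hbmeas hcmeas T hT hVint hTbound η ξ hη0 hξ0 B
    Cη Cξ hCη hCξ hdiff
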